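/- Let R be a commutative ring and n, m ≥ 1. Let β_{n,m} be the (n+m)×(n+m) matrix over R given in block form by β_{n,m} = [[A_{m,n}, I_m],[(−1)^m I_n, 0]], where A_{m,n} is the m×n matrix with (i,j) entry (−1)^{i+1}·2 and I_k denotes the k×k identity matrix. Then β_{n,m} is invertible and preserves the data of X^{#(n+m)}: ∂_{n+m}(β_{n,m}x) = ∂_{n+m}(x) and λ_{n+m}(β_{n,m}x, β_{n,m}y) = λ_{n+m}(x,y) for all x, y ∈ R^{n+m}; that is, β_{n,m} ∈ Aut(X^{#(n+m)}). -/
import Mathlib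

open Finset

/-- The bilinear form of the formed space with boundary `X^{#n}`. -/
def lamX (R : Type) [CommRing R] (n : ℕ) (x y : Fin n → R) : R :=
  ∑ i : Fin n, ∑ j : Fin n, (if (i : ℕ) < (j : ℕ) then x i * y j
    else if (j : ℕ) < (i : ℕ) then -(x i * y j) else 0)

/-- The boundary map of `X^{#n}`. -/
def bdX (R : Type) [CommRing R] (n : ℕ) (x : Fin n → R) : R := ∑ i, x i

/-- The block braiding matrix `β_{n,m} = [[A_{m,n}, I_m], [(-1)^m I_n, 0]]`, where `A_{m,n}` is
the `m × n` matrix with `(i,j)` entry `(-1)^(i+1)·2` (1-indexed; `(-1)^i·2` for 0-indexed `i`). -/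
def betaMat (R : Type) [CommRing R] (n m : ℕ) : Matrix (Fin (n + m)) (Fin (n + m)) R :=
  Matrix.of fun i j =>
    if (i : ℕ) < m then
      (if (j : ℕ) < n then (-1 : R) ^ (i : ℕ) * 2
       else if (j : ℕ) = n + (i : ℕ) then 1 else 0)
    else
      (if (j : ℕ) + m = (i : ℕ) then (-1 : R) ^ m else 0)

namespace BetaAux

variable {R : Type} [CommRing R]

/-- Splitting a range sum. -/
lemma sum_range_add' (f : ℕ → R) (a b : ℕ) :
    ∑ i ∈ range (a + b), f i = (∑ i ∈ range a, f i) + ∑ i ∈ range b, f (a + i) := by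
  induction b with
  | zero => simp
  | succ b ih =>
      rw [show a + (b+1) = (a+b)+1 by omega, sum_range_succ, ih, sum_range_succ, add_assoc]

/-- nat-indexed version of `lamX`. -/
def lamN (N : ℕ) (F G : ℕ → R) : R :=
  ∑ i ∈ range N, ∑ j ∈ range N,
    (if i < j then F i * G j else if j < i then -(F i * G j) else 0)

/-- `E f j = 2 * (partial sum below j) + f j`. -/
def Efun (f : ℕ → R) (j : ℕ) : R := 2 * (∑ i ∈ range j, f i) + f j

/-- nat-indexed version of the action of `betaMat`. -/
def Bfun (n m : ℕ) (x : ℕ → R) (i : ℕ) : R :=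
  if i < m then (-1 : R) ^ i * 2 * (∑ k ∈ range n, x k) + x (n + i)
  else (-1 : R) ^ m * x (i - m)

lemma lamN_succ (N : ℕ) (F G : ℕ → R) :
    lamN (N + 1) F G = lamN N F G
      + ((∑ i ∈ range N, F i) * G N - F N * (∑ j ∈ range N, G j)) := by
  unfold lamN
  rw [sum_range_succ]
  have h1 : ∀ i ∈ range N,
      (∑ j ∈ range (N+1), (if i < j then F i * G j else if j < i then -(F i * G j) else 0))
      = (∑ j ∈ range N, (if i < j then F i * G j else if j < i then -(F i * G j) else 0))
        + F i * G N := by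
    intro i hi
    rw [mem_range] at hi
    rw [sum_range_succ, if_pos hi]
  rw [sum_congr rfl h1, sum_add_distrib]
  have h2 : (∑ j ∈ range (N+1), (if N < j then F N * G j else if j < N then -(F N * G j) else 0))
      = -(F N * ∑ j ∈ range N, G j) := by
    rw [sum_range_succ, if_neg (lt_irrefl N), if_neg (lt_irrefl N)]
    rw [show (∑ j ∈ range N, (if N < j then F N * G j else if j < N then -(F N * G j) else 0))
        = ∑ j ∈ range N, -(F N * G j) from sum_congr rfl fun j hj => by
          rw [mem_range] at hj
          rw [if_neg (by omega), if_pos hj]]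
    rw [add_zero, sum_neg_distrib, ← mul_sum]
  rw [h2, ← sum_mul]
  ring

lemma lamN_eq (N : ℕ) (F G : ℕ → R) :
    lamN N F G = (∑ j ∈ range N, G j * Efun F j)
      - (∑ i ∈ range N, F i) * (∑ i ∈ range N, G i) := by
  induction N with
  | zero => simp [lamN]
  | succ N ih =>
      rw [lamN_succ, ih, sum_range_succ, sum_range_succ, sum_range_succ]
      unfold Efun
      ring

lemma P1 (k : ℕ) : ∑ i ∈ range k, ((-1 : R) ^ i * 2) = 1 - (-1 : R) ^ k := by
  induction k with
  | zero => simp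
  | succ k ih => rw [sum_range_succ, ih, pow_succ]; ring

lemma P2 (k : ℕ) (f : ℕ → R) :
    ∑ j ∈ range k, ((-1 : R) ^ j * 2) * Efun f j
      = -2 * (-1 : R) ^ k * ∑ j ∈ range k, f j := by
  induction k with
  | zero => simp
  | succ k ih =>
      rw [sum_range_succ, ih, sum_range_succ, pow_succ]
      unfold Efun
      ring

lemma Q1 (n m : ℕ) (x : ℕ → R) :
    ∀ j, j ≤ m → ∑ i ∈ range j, Bfun n m x i
      = (1 - (-1 : R) ^ j) * (∑ k ∈ range n, x k) + ∑ i ∈ range j, x (n + i) := by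
  intro j
  induction j with
  | zero => simp
  | succ j ih =>
      intro hj
      rw [sum_range_succ, ih (by omega), sum_range_succ, Bfun, if_pos (by omega : j < m),
        pow_succ]
      ring

lemma Q2 (n m : ℕ) (x : ℕ → R) (k : ℕ) :
    ∑ i ∈ range (m + k), Bfun n m x i
      = (1 - (-1 : R) ^ m) * (∑ k ∈ range n, x k) + (∑ i ∈ range m, x (n + i))
        + (-1 : R) ^ m * ∑ l ∈ range k, x l := by
  induction k with
  | zero => simp [Q1 n m x m le_rfl]
  | succ k ih =>
      rw [show m + (k+1) = (m+k)+1 by omega, sum_range_succ, ih, sum_range_succ, Bfun,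
        if_neg (by omega : ¬ m + k < m), show m + k - m = k by omega]
      ring

lemma bd_pres (n m : ℕ) (x : ℕ → R) :
    ∑ i ∈ range (n + m), Bfun n m x i = ∑ i ∈ range (n + m), x i := by
  have hR : ∑ i ∈ range (n + m), x i
      = (∑ k ∈ range n, x k) + ∑ i ∈ range m, x (n + i) := sum_range_add' x n m
  have hL : ∑ i ∈ range (n + m), Bfun n m x i
      = (1 - (-1 : R) ^ m) * (∑ k ∈ range n, x k) + (∑ i ∈ range m, x (n + i))
        + (-1 : R) ^ m * ∑ l ∈ range n, x l := by
    rw [show n + m = m + n by omega]; exact Q2 n m x n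
  rw [hL, hR]; ring

lemma W_pres (n m : ℕ) (x y : ℕ → R) :
    ∑ j ∈ range (n + m), Bfun n m y j * Efun (Bfun n m x) j
      = ∑ j ∈ range (n + m), y j * Efun x j := by
  set s : R := ∑ k ∈ range n, x k with hs
  set t : R := ∑ k ∈ range n, y k with ht
  set S' : R := ∑ i ∈ range m, x (n + i) with hS'
  set Sy : R := ∑ i ∈ range m, y (n + i) with hSy
  set A : R := ∑ j ∈ range m, y (n + j) * Efun (fun i => x (n + i)) j with hA
  set B : R := ∑ k ∈ range n, y k * Efun x k with hB
  set ε : R := (-1 : R) ^ m with he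
  have hε : ε * ε = 1 := by
    rw [he, ← pow_add]; exact Even.neg_one_pow ⟨m, rfl⟩
  have hRHS : ∑ j ∈ range (n + m), y j * Efun x j = B + (2 * s * Sy + A) := by
    rw [sum_range_add']
    have : ∀ j ∈ range m, y (n + j) * Efun x (n + j)
        = (2 * s) * y (n + j) + y (n + j) * Efun (fun i => x (n + i)) j := by
      intro j hj
      unfold Efun
      rw [sum_range_add' x n j, ← hs]
      ring
    rw [sum_congr rfl this, sum_add_distrib, ← mul_sum, ← hSy, ← hA, ← hB]
  have h1 : ∑ j ∈ range m, Bfun n m y j * Efun (Bfun n m x) j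
      = (2 * s * t) * (1 - ε) + t * (-2 * ε * S') + 2 * s * Sy + A := by
    have : ∀ j ∈ range m, Bfun n m y j * Efun (Bfun n m x) j
        = (2 * s * t) * ((-1 : R) ^ j * 2)
          + t * (((-1 : R) ^ j * 2) * Efun (fun i => x (n + i)) j)
          + (2 * s) * y (n + j)
          + y (n + j) * Efun (fun i => x (n + i)) j := by
      intro j hj
      rw [mem_range] at hj
      unfold Efun
      rw [Q1 n m x j (le_of_lt hj)]
      unfold Bfun
      rw [if_pos hj, if_pos hj, ← hs, ← ht]
      ring
    rw [sum_congr rfl this, sum_add_distrib, sum_add_distrib, sum_add_distrib,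
      ← mul_sum, ← mul_sum, ← mul_sum, P1, P2]
  have h2 : ∑ k ∈ range n, Bfun n m y (m + k) * Efun (Bfun n m x) (m + k)
      = (2 * ε * (1 - ε) * s + 2 * ε * S') * t + (ε * ε) * B := by
    have : ∀ k ∈ range n, Bfun n m y (m + k) * Efun (Bfun n m x) (m + k)
        = (2 * ε * (1 - ε) * s + 2 * ε * S') * y k + (ε * ε) * (y k * Efun x k) := by
      intro k hk
      unfold Efun
      rw [Q2 n m x k]
      unfold Bfun
      rw [if_neg (by omega : ¬ m + k < m), if_neg (by omega : ¬ m + k < m),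
        show m + k - m = k by omega, ← hs, ← hS', ← he]
      ring
    rw [sum_congr rfl this, sum_add_distrib, ← mul_sum, ← mul_sum]
  rw [hRHS, show n + m = m + n by omega, sum_range_add', h1, h2]
  linear_combination (B - 2 * s * t) * hε

end BetaAux

namespace BetaAux

variable {R : Type} [CommRing R]

lemma lam_pres (n m : ℕ) (x y : ℕ → R) :
    lamN (n + m) (Bfun n m x) (Bfun n m y) = lamN (n + m) x y := by
  rw [lamN_eq, lamN_eq, W_pres, bd_pres, bd_pres]

/-- extension of a `Fin`-indexed vector to `ℕ`. -/
def extN (N : ℕ) (x : Fin N → R) (k : ℕ) : R := if h : k < N then x ⟨k, h⟩ else 0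

lemma extN_coe (N : ℕ) (x : Fin N → R) (j : Fin N) : extN N x ↑j = x j := by
  simp [extN, j.isLt]

lemma mulVec_eq (n m : ℕ) (x : Fin (n + m) → R) (i : Fin (n + m)) :
    (betaMat R n m).mulVec x i = Bfun n m (extN (n + m) x) ↑i := by
  have step1 : (betaMat R n m).mulVec x i
      = ∑ j ∈ range (n + m),
          (if (i : ℕ) < m then
            (if j < n then (-1 : R) ^ (i : ℕ) * 2
             else if j = n + (i : ℕ) then 1 else 0)
           else (if j + m = (i : ℕ) then (-1 : R) ^ m else 0)) * extN (n + m) x j := by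
    rw [Matrix.mulVec, dotProduct, ← Fin.sum_univ_eq_sum_range]
    exact sum_congr rfl fun j _ => by rw [extN_coe]; rfl
  rw [step1]
  by_cases hi : (i : ℕ) < m
  · simp only [if_pos hi, Bfun]
    rw [sum_range_add']
    congr 1
    · rw [mul_sum]
      exact sum_congr rfl fun j hj => by rw [mem_range] at hj; rw [if_pos hj]
    · have h1 : ∀ j ∈ range m,
          (if n + j < n then (-1 : R) ^ (i : ℕ) * 2
           else if n + j = n + (i : ℕ) then 1 else 0) * extN (n + m) x (n + j)
          = if j = (i : ℕ) then extN (n + m) x (n + j) else 0 := by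
        intro j hj
        by_cases h : j = (i : ℕ)
        · simp [h, if_neg (by omega : ¬ n + (i : ℕ) < n)]
        · rw [if_neg (by omega : ¬ n + j < n), if_neg (by omega : ¬ n + j = n + (i : ℕ)),
            if_neg h, zero_mul]
      rw [sum_congr rfl h1, Finset.sum_ite_eq' (range m) ((i : ℕ)),
        if_pos (mem_range.mpr hi)]
  · push_neg at hi
    simp only [if_neg (not_lt.mpr hi), Bfun]
    have h1 : ∀ j ∈ range (n + m),
        (if j + m = (i : ℕ) then (-1 : R) ^ m else 0) * extN (n + m) x j
        = if j = (i : ℕ) - m then (-1 : R) ^ m * extN (n + m) x j else 0 := by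
      intro j hj
      by_cases h : j + m = (i : ℕ)
      · rw [if_pos h, if_pos (by omega)]
      · rw [if_neg h, if_neg (by omega), zero_mul]
    rw [sum_congr rfl h1, Finset.sum_ite_eq' (range (n + m)) ((i : ℕ) - m),
      if_pos (mem_range.mpr (by have := i.isLt; omega))]

lemma bdX_eq (N : ℕ) (x : Fin N → R) : bdX R N x = ∑ i ∈ range N, extN N x i := by
  rw [bdX, ← Fin.sum_univ_eq_sum_range]
  exact sum_congr rfl fun i _ => (extN_coe N x i).symm

lemma lamX_eq (N : ℕ) (x y : Fin N → R) : lamX R N x y = lamN N (extN N x) (extN N y) := by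
  rw [lamX, lamN, ← Fin.sum_univ_eq_sum_range]
  refine sum_congr rfl fun i _ => ?_
  rw [← Fin.sum_univ_eq_sum_range]
  exact sum_congr rfl fun j _ => by rw [extN_coe, extN_coe]

end BetaAux

/-- Explicit inverse of `betaMat`. -/
def gammaMat (R : Type) [CommRing R] (n m : ℕ) : Matrix (Fin (n + m)) (Fin (n + m)) R :=
  Matrix.of fun i j =>
    if (i : ℕ) < n then (if (j : ℕ) = m + (i : ℕ) then (-1 : R) ^ m else 0)
    else
      (if (j : ℕ) + n = (i : ℕ) then 1
       else if m ≤ (j : ℕ) then -((-1 : R) ^ ((i : ℕ) - n) * (-1 : R) ^ m * 2) else 0)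

namespace BetaAux

variable {R : Type} [CommRing R]

lemma beta_mul_gamma (n m : ℕ) : betaMat R n m * gammaMat R n m = 1 := by
  ext i j
  rw [Matrix.mul_apply, Matrix.one_apply]
  have hi2 : (i : ℕ) < n + m := i.isLt
  have hj2 : (j : ℕ) < n + m := j.isLt
  have hε : ((-1 : R) ^ m) * ((-1 : R) ^ m) = 1 := by
    rw [← pow_add]; exact Even.neg_one_pow ⟨m, rfl⟩
  have step1 : ∑ p : Fin (n + m), betaMat R n m i p * gammaMat R n m p j
      = ∑ p ∈ range (n + m),
          (if (i : ℕ) < m then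
            (if p < n then (-1 : R) ^ (i : ℕ) * 2
             else if p = n + (i : ℕ) then 1 else 0)
           else (if p + m = (i : ℕ) then (-1 : R) ^ m else 0)) *
          (if p < n then (if (j : ℕ) = m + p then (-1 : R) ^ m else 0)
           else
            (if (j : ℕ) + n = p then 1
             else if m ≤ (j : ℕ) then -((-1 : R) ^ (p - n) * (-1 : R) ^ m * 2) else 0)) := by
    rw [← Fin.sum_univ_eq_sum_range]
    exact sum_congr rfl fun p _ => rfl
  rw [step1, sum_range_add']
  simp only [Fin.ext_iff]
  by_cases hi : (i : ℕ) < m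
  · simp only [if_pos hi]
    by_cases hj : (j : ℕ) < m
    · -- piece1 = 0, piece2 = δ
      have h1 : ∀ p ∈ range n,
          ((if p < n then (-1 : R) ^ (i : ℕ) * 2
            else if p = n + (i : ℕ) then 1 else 0) *
           (if p < n then (if (j : ℕ) = m + p then (-1 : R) ^ m else 0)
            else
             (if (j : ℕ) + n = p then 1
              else if m ≤ (j : ℕ) then -((-1 : R) ^ (p - n) * (-1 : R) ^ m * 2) else 0)))
          = 0 := by
        intro p hp
        rw [mem_range] at hp
        rw [if_pos hp, if_pos hp, if_neg (by omega), mul_zero]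
      have h2 : ∀ p ∈ range m,
          ((if n + p < n then (-1 : R) ^ (i : ℕ) * 2
            else if n + p = n + (i : ℕ) then 1 else 0) *
           (if n + p < n then (if (j : ℕ) = m + (n + p) then (-1 : R) ^ m else 0)
            else
             (if (j : ℕ) + n = n + p then 1
              else if m ≤ (j : ℕ) then -((-1 : R) ^ (n + p - n) * (-1 : R) ^ m * 2) else 0)))
          = if p = (i : ℕ) then (if (i : ℕ) = (j : ℕ) then 1 else 0) else 0 := by
        intro p hp
        rw [mem_range] at hp
        rw [if_neg (by omega : ¬ n + p < n), if_neg (by omega : ¬ n + p < n)]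
        by_cases h : p = (i : ℕ)
        · rw [if_pos (by omega), if_pos h, one_mul]
          by_cases h' : (i : ℕ) = (j : ℕ)
          · rw [if_pos (by omega), if_pos h']
          · rw [if_neg (by omega), if_neg (by omega : ¬ m ≤ (j : ℕ)), if_neg h']
        · rw [if_neg (by omega), if_neg h, zero_mul]
      rw [sum_congr rfl h1, sum_congr rfl h2, Finset.sum_ite_eq' (range m) ((i : ℕ)),
        if_pos (mem_range.mpr hi), Finset.sum_const_zero, zero_add]
    · -- j ≥ m : total 0
      push_neg at hj
      have h1 : ∀ p ∈ range n,
          ((if p < n then (-1 : R) ^ (i : ℕ) * 2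
            else if p = n + (i : ℕ) then 1 else 0) *
           (if p < n then (if (j : ℕ) = m + p then (-1 : R) ^ m else 0)
            else
             (if (j : ℕ) + n = p then 1
              else if m ≤ (j : ℕ) then -((-1 : R) ^ (p - n) * (-1 : R) ^ m * 2) else 0)))
          = if p = (j : ℕ) - m then (-1 : R) ^ (i : ℕ) * 2 * (-1 : R) ^ m else 0 := by
        intro p hp
        rw [mem_range] at hp
        rw [if_pos hp, if_pos hp]
        by_cases h : p = (j : ℕ) - m
        · rw [if_pos (by omega), if_pos h]
        · rw [if_neg (by omega), mul_zero, if_neg h]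
      have h2 : ∀ p ∈ range m,
          ((if n + p < n then (-1 : R) ^ (i : ℕ) * 2
            else if n + p = n + (i : ℕ) then 1 else 0) *
           (if n + p < n then (if (j : ℕ) = m + (n + p) then (-1 : R) ^ m else 0)
            else
             (if (j : ℕ) + n = n + p then 1
              else if m ≤ (j : ℕ) then -((-1 : R) ^ (n + p - n) * (-1 : R) ^ m * 2) else 0)))
          = if p = (i : ℕ) then -((-1 : R) ^ (i : ℕ) * (-1 : R) ^ m * 2) else 0 := by
        intro p hp
        rw [mem_range] at hp
        rw [if_neg (by omega : ¬ n + p < n), if_neg (by omega : ¬ n + p < n),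
          if_neg (by omega : ¬ (j : ℕ) + n = n + p), if_pos hj,
          show n + p - n = p by omega]
        by_cases h : p = (i : ℕ)
        · rw [if_pos (by omega), if_pos h, one_mul, h]
        · rw [if_neg (by omega), if_neg h, zero_mul]
      rw [sum_congr rfl h1, sum_congr rfl h2,
        Finset.sum_ite_eq' (range n) ((j : ℕ) - m),
        Finset.sum_ite_eq' (range m) ((i : ℕ)),
        if_pos (mem_range.mpr (by omega : (j : ℕ) - m < n)),
        if_pos (mem_range.mpr hi), if_neg (by omega : ¬ (i : ℕ) = (j : ℕ))]
      ring
  · -- i ≥ m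
    push_neg at hi
    simp only [if_neg (not_lt.mpr hi)]
    have h1 : ∀ p ∈ range n,
        ((if p + m = (i : ℕ) then (-1 : R) ^ m else 0) *
         (if p < n then (if (j : ℕ) = m + p then (-1 : R) ^ m else 0)
          else
           (if (j : ℕ) + n = p then 1
            else if m ≤ (j : ℕ) then -((-1 : R) ^ (p - n) * (-1 : R) ^ m * 2) else 0)))
        = if p = (i : ℕ) - m then
            (if (i : ℕ) = (j : ℕ) then (-1 : R) ^ m * (-1 : R) ^ m else 0) else 0 := by
      intro p hp
      rw [mem_range] at hp
      rw [if_pos hp]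
      by_cases h : p = (i : ℕ) - m
      · rw [if_pos (by omega), if_pos h]
        by_cases h' : (i : ℕ) = (j : ℕ)
        · rw [if_pos (by omega), if_pos h']
        · rw [if_neg (by omega), mul_zero, if_neg h']
      · rw [if_neg (by omega), zero_mul, if_neg h]
    have h2 : ∀ p ∈ range m,
        ((if (n + p) + m = (i : ℕ) then (-1 : R) ^ m else 0) *
         (if n + p < n then (if (j : ℕ) = m + (n + p) then (-1 : R) ^ m else 0)
          else
           (if (j : ℕ) + n = n + p then 1
            else if m ≤ (j : ℕ) then -((-1 : R) ^ (n + p - n) * (-1 : R) ^ m * 2) else 0)))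
        = 0 := by
      intro p hp
      rw [mem_range] at hp
      rw [if_neg (by omega : ¬ (n + p) + m = (i : ℕ)), zero_mul]
    rw [sum_congr rfl h1, sum_congr rfl h2,
      Finset.sum_ite_eq' (range n) ((i : ℕ) - m),
      if_pos (mem_range.mpr (by omega : (i : ℕ) - m < n)),
      Finset.sum_const_zero, add_zero, hε]

end BetaAux

open BetaAux in
/-- the matrix `β_{n,m}` is invertible and preserves the boundary map and the
form of `X^{#(n+m)}`, i.e. `β_{n,m} ∈ Aut(X^{#(n+m)})`. -/
theorem betaMat_mem_AutX (R : Type) [CommRing R] (n m : ℕ) (hn : 1 ≤ n) (hm : 1 ≤ m) :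
    IsUnit (betaMat R n m) ∧
    (∀ x : Fin (n + m) → R, bdX R (n + m) ((betaMat R n m).mulVec x) = bdX R (n + m) x) ∧
    (∀ x y : Fin (n + m) → R,
      lamX R (n + m) ((betaMat R n m).mulVec x) ((betaMat R n m).mulVec y)
        = lamX R (n + m) x y) := by
  refine ⟨?_, ?_, ?_⟩
  · exact ⟨⟨betaMat R n m, gammaMat R n m, beta_mul_gamma n m,
      mul_eq_one_comm.mp (beta_mul_gamma n m)⟩, rfl⟩
  · intro x
    rw [bdX_eq, bdX_eq]
    have h : ∀ i ∈ range (n + m),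
        extN (n + m) ((betaMat R n m).mulVec x) i = Bfun n m (extN (n + m) x) i := by
      intro i hi
      rw [mem_range] at hi
      have : extN (n + m) ((betaMat R n m).mulVec x) i
          = (betaMat R n m).mulVec x ⟨i, hi⟩ := by simp [extN, hi]
      rw [this, mulVec_eq]
    rw [sum_congr rfl h, bd_pres]
  · intro x y
    rw [lamX_eq, lamX_eq]
    have h : ∀ z : Fin (n + m) → R, ∀ i, i < n + m →
        extN (n + m) ((betaMat R n m).mulVec z) i = Bfun n m (extN (n + m) z) i := by
      intro z i hi
      have : extN (n + m) ((betaMat R n m).mulVec z) i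
          = (betaMat R n m).mulVec z ⟨i, hi⟩ := by simp [extN, hi]
      rw [this, mulVec_eq]
    have key : lamN (n + m) (extN (n + m) ((betaMat R n m).mulVec x))
        (extN (n + m) ((betaMat R n m).mulVec y))
        = lamN (n + m) (Bfun n m (extN (n + m) x)) (Bfun n m (extN (n + m) y)) := by
      unfold lamN
      refine sum_congr rfl fun i hi => sum_congr rfl fun j hj => ?_
      rw [mem_range] at hi hj
      rw [h x i hi, h y j hj]
    rw [key, lam_pres]
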